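/- arXiv:1407.6848 — 3 statements merged into one kernel-verified Lean document; each statement's English description precedes it below -/
import Mathlib

section
/- Let F be a cumulative distribution function on ℝ with mean μ whose support is contained in a bounded interval [a,b] with a < b. Then there exist random variables X_i, i ∈ ℕ, each with distribution F, such that for every n ∈ ℕ, |S_n − nμ| ≤ b − a almost surely, where S_n = X₁ + ⋯ + X_n. -/
open MeasureTheory ProbabilityTheory Set Filter Topology Asymptotics

noncomputable section

/-- Generalized inverse `F⁻¹` of the CDF of the distribution `ν`:
`F⁻¹(t) = inf {x | F(x) ≥ t}` for `t ≠ 0` and `F⁻¹(0) = inf {x | F(x) > 0}`. -/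
def qf (ν : Measure ℝ) (t : ℝ) : ℝ :=
  if t = 0 then sInf {x : ℝ | 0 < (ν (Iic x)).toReal}
  else sInf {x : ℝ | t ≤ (ν (Iic x)).toReal}

/-- `H(s) = ∫₀ˢ (F⁻¹(t) − μ) dt`. -/
def Hfun (ν : Measure ℝ) (μ : ℝ) (s : ℝ) : ℝ := ∫ t in (0:ℝ)..s, (qf ν t - μ)

/-- `ν = F(μ−)`. -/
def nuM (ν : Measure ℝ) (μ : ℝ) : ℝ := (ν (Iio μ)).toReal

/-- `ν⁺ = F(μ)`. -/
def nuP (ν : Measure ℝ) (μ : ℝ) : ℝ := (ν (Iic μ)).toReal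

/-- `c = H(ν)`, the minimum value of `H`. -/
def cval (ν : Measure ℝ) (μ : ℝ) : ℝ := Hfun ν μ (nuM ν μ)

/-- `A : [c,0] → [0,ν]`, the inverse of `H` on `[0,ν)`, with `A(c) = ν⁺`. -/
def Afun (ν : Measure ℝ) (μ : ℝ) (s : ℝ) : ℝ :=
  if s = cval ν μ then nuP ν μ
  else sInf {t : ℝ | t ∈ Icc 0 (nuM ν μ) ∧ Hfun ν μ t ≤ s}

/-- `B : [c,0] → [ν⁺,1]`, the inverse of `H` on `(ν⁺,1]`, with `B(c) = ν⁺`. -/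
def Bfun (ν : Measure ℝ) (μ : ℝ) (s : ℝ) : ℝ :=
  if s = cval ν μ then nuP ν μ
  else sInf {t : ℝ | t ∈ Icc (nuP ν μ) 1 ∧ s ≤ Hfun ν μ t}

/-- The distribution function `K`, supported on `[c,0]`. -/
def Kfun (ν : Measure ℝ) (μ : ℝ) (s : ℝ) : ℝ :=
  if 0 < s then 1
  else if s < cval ν μ then 0
  else if s = cval ν μ then nuP ν μ - nuM ν μ
  else Bfun ν μ s - Afun ν μ s

/-- `u(s) = (μ − F⁻¹(A(s))) / (F⁻¹(B(s)) − F⁻¹(A(s)))` for `s ∈ (c,0)`, `u(c) = 1/2`. -/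
def ufun (ν : Measure ℝ) (μ : ℝ) (s : ℝ) : ℝ :=
  if s = cval ν μ then 1/2
  else (μ - qf ν (Afun ν μ s)) / (qf ν (Bfun ν μ s) - qf ν (Afun ν μ s))

/-- Generalized inverse of the distribution function `K`. -/
def Kinv (ν : Measure ℝ) (μ : ℝ) (t : ℝ) : ℝ := sInf {s : ℝ | t ≤ Kfun ν μ s}

/-- The map `t ↦ F⁻¹(B(Y(t))) − F⁻¹(A(Y(t)))` where `Y = K⁻¹` is the quantile
transform of `K`; applied to a uniform random variable it realizes the residual
distribution of `F`. -/
def residualRV (ν : Measure ℝ) (μ : ℝ) (t : ℝ) : ℝ :=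
  qf ν (Bfun ν μ (Kinv ν μ t)) - qf ν (Afun ν μ (Kinv ν μ t))

/-- The residual distribution `F̃` of `F`: the law of `F⁻¹(B(Y)) − F⁻¹(A(Y))`
for `Y ∼ K`. -/
def residualDist (ν : Measure ℝ) (μ : ℝ) : Measure ℝ :=
  Measure.map (residualRV ν μ) (volume.restrict (Icc (0:ℝ) 1))

end

/-!
Draw a pair `x < μ < y` from `ν|_(-∞,μ) ⊗ ν|_(μ,∞)` with density proportional to `y - x`, plus an
atom of mass `ν {μ}` at `(μ, μ)`, and let each `X_i` be `y` with probability `q = (μ - x)/(y - x)`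
and `x` otherwise. Averaging over the pair gives back `ν`, because the mean condition makes the
two halves of `ν` carry the same first absolute moment about `μ`.
All `X_i` are driven by one uniform `ω` through the rotation coding
`X_i = x + (y - x) (⌈(i + 1) q + ω⌉ - ⌈i q + ω⌉)`, so `S_n = n x + (y - x) (⌈n q + ω⌉ - ⌈ω⌉)`
telescopes to within `y - x ≤ b - a` of `n μ`.
-/

noncomputable def jumpSet (q : ℝ) : Set ℝ := {s | ⌈s⌉ < ⌈s + q⌉}

noncomputable def rotationStep (q ω : ℝ) (i : ℕ) : ℝ :=
  (⌈((i : ℝ) + 1) * q + ω⌉ - ⌈(i : ℝ) * q + ω⌉ : ℤ)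

theorem sum_range_rotationStep (q ω : ℝ) (n : ℕ) :
    ∑ i ∈ Finset.range n, rotationStep q ω i = ⌈(n : ℝ) * q + ω⌉ - ⌈ω⌉ := by
  simpa [rotationStep] using Finset.sum_range_sub (fun i : ℕ => (⌈(i : ℝ) * q + ω⌉ : ℝ)) n

theorem abs_sum_range_rotationStep_sub_lt (q ω : ℝ) (n : ℕ) :
    |∑ i ∈ Finset.range n, rotationStep q ω i - n * q| < 1 := by
  rw [sum_range_rotationStep, abs_sub_lt_iff]
  have h₁ := Int.le_ceil ((n : ℝ) * q + ω)
  have h₂ := Int.ceil_lt_add_one ((n : ℝ) * q + ω)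
  have h₃ := Int.le_ceil ω
  have h₄ := Int.ceil_lt_add_one ω
  constructor <;> linarith

theorem measurableSet_jumpSet (q : ℝ) : MeasurableSet (jumpSet q) :=
  measurableSet_lt (by fun_prop) (by fun_prop)

theorem jumpSet_add_one_mem_iff (q s : ℝ) : s + 1 ∈ jumpSet q ↔ s ∈ jumpSet q := by
  simp only [jumpSet, mem_ofPred_eq, add_right_comm s 1 q, Int.ceil_add_one, add_lt_add_iff_right]

theorem jumpSet_inter_Ioc {q : ℝ} (hq : q ∈ Icc (0 : ℝ) 1) :
    jumpSet q ∩ Ioc (-q) (-q + 1) = Ioc (-q) 0 := by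
  ext s
  simp only [jumpSet, mem_inter_iff, mem_ofPred_eq, mem_Ioc]
  constructor
  · rintro ⟨hjump, hlo, hhi⟩
    have h₁ : ⌈s + q⌉ = 1 := by rw [Int.ceil_eq_iff]; push_cast; constructor <;> linarith
    have h₀ : ⌈s⌉ ≤ 0 := by omega
    exact ⟨hlo, by exact_mod_cast Int.ceil_le.1 h₀⟩
  · rintro ⟨hlo, hhi⟩
    have h₁ : ⌈s + q⌉ = 1 := by rw [Int.ceil_eq_iff]; push_cast; constructor <;> linarith [hq.2]
    have h₀ : ⌈s⌉ ≤ 0 := Int.ceil_le.2 (by exact_mod_cast hhi)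
    exact ⟨by omega, hlo, by linarith [hq.2]⟩

theorem rotationStep_eq_indicator {q : ℝ} (hq : q ∈ Icc (0 : ℝ) 1) (ω : ℝ) (i : ℕ) :
    rotationStep q ω i = (jumpSet q).indicator 1 (i * q + ω) := by
  have hshift : ((i : ℝ) + 1) * q + ω = (i * q + ω) + q := by ring
  have hle : ⌈(i : ℝ) * q + ω⌉ ≤ ⌈(i * q + ω) + q⌉ := Int.ceil_mono (by linarith [hq.1])
  have hle' : ⌈(i * q + ω) + q⌉ ≤ ⌈(i : ℝ) * q + ω⌉ + 1 := by
    rw [← Int.ceil_add_one]; exact Int.ceil_mono (by linarith [hq.2])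
  rw [rotationStep, hshift]
  by_cases h : (i : ℝ) * q + ω ∈ jumpSet q
  · rw [indicator_of_mem h, Pi.one_apply, show ⌈(i * q + ω) + q⌉ = ⌈(i : ℝ) * q + ω⌉ + 1 by
      simp only [jumpSet, mem_ofPred_eq] at h; omega]
    simp
  · rw [indicator_of_notMem h, show ⌈(i * q + ω) + q⌉ = ⌈(i : ℝ) * q + ω⌉ by
      simp only [jumpSet, mem_ofPred_eq] at h; omega]
    simp

theorem volume_inter_Ioc_eq_of_add_one_mem_iff {S : Set ℝ} (hS : MeasurableSet S)
    (hper : ∀ s, s + 1 ∈ S ↔ s ∈ S) (t u : ℝ) :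
    volume (S ∩ Ioc t (t + 1)) = volume (S ∩ Ioc u (u + 1)) := by
  have hvolume : ∀ t, volume (S ∩ Ioc t (t + 1))
      = ENNReal.ofReal (∫ x in t..t + 1, S.indicator 1 x) := by
    intro t
    rw [intervalIntegral.integral_of_le (by linarith), integral_indicator_one hS,
      measureReal_restrict_apply hS,
      ofReal_measureReal ((measure_mono inter_subset_right).trans_lt (by simp)).ne]
  have hperiodic : Function.Periodic (S.indicator (1 : ℝ → ℝ)) 1 := fun s => by
    by_cases h : s ∈ S
    · rw [indicator_of_mem h, indicator_of_mem ((hper s).2 h)]; rfl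
    · rw [indicator_of_notMem h, indicator_of_notMem (mt (hper s).1 h)]
  rw [hvolume, hvolume, hperiodic.intervalIntegral_add_eq]

theorem volume_preimage_add_jumpSet {q : ℝ} (hq : q ∈ Icc (0 : ℝ) 1) (c : ℝ) :
    volume ((fun ω => c + ω) ⁻¹' jumpSet q ∩ Ioc 0 1) = ENNReal.ofReal q := by
  -- by periodicity, the window `(c, c + 1]` may be moved to `(-q, 1 - q]`
  have hpre : (fun ω => c + ω) ⁻¹' (jumpSet q ∩ Ioc c (c + 1))
      = (fun ω => c + ω) ⁻¹' jumpSet q ∩ Ioc 0 1 := by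
    rw [preimage_inter, preimage_const_add_Ioc]; simp
  rw [← hpre, measure_preimage_add, volume_inter_Ioc_eq_of_add_one_mem_iff
    (measurableSet_jumpSet q) (jumpSet_add_one_mem_iff q) c (-q), jumpSet_inter_Ioc hq,
    Real.volume_Ioc]
  simp

theorem map_ite_mem {Ω β : Type*} [MeasurableSpace Ω] [MeasurableSpace β]
    [MeasurableSingletonClass β] (P : Measure Ω) {S : Set Ω} (hS : MeasurableSet S) (x y : β)
    [DecidablePred (· ∈ S)] :
    P.map (fun ω => if ω ∈ S then y else x) = P Sᶜ • Measure.dirac x + P S • Measure.dirac y := by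
  classical
  ext B hB
  have hm : Measurable fun ω => if ω ∈ S then y else x :=
    Measurable.piecewise hS measurable_const measurable_const
  have hpre : (fun ω => if ω ∈ S then y else x) ⁻¹' B
      = (if x ∈ B then Sᶜ else ∅) ∪ (if y ∈ B then S else ∅) := by
    ext ω
    by_cases hω : ω ∈ S <;> by_cases hx : x ∈ B <;> by_cases hy : y ∈ B <;> simp [*]
  rw [Measure.map_apply hm hB, hpre, Measure.add_apply, Measure.smul_apply, Measure.smul_apply,
    Measure.dirac_apply' _ hB, Measure.dirac_apply' _ hB]
  by_cases hx : x ∈ B <;> by_cases hy : y ∈ B <;>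
    simp [hx, hy, add_comm (P Sᶜ), measure_add_measure_compl hS]

instance isProbabilityMeasure_restrict_Ioc_zero_one :
    IsProbabilityMeasure (volume.restrict (Ioc (0 : ℝ) 1)) :=
  ⟨by simp⟩

/-- At `p.1 = p.2` the division by zero gives `0`, so the pair `(μ, μ)` yields the constant `μ`. -/
noncomputable def meanWeight (μ : ℝ) (p : ℝ × ℝ) : ℝ := (μ - p.1) / (p.2 - p.1)

noncomputable def pairStep (μ : ℝ) (p : ℝ × ℝ) (ω : ℝ) (i : ℕ) : ℝ :=
  p.1 + (p.2 - p.1) * rotationStep (meanWeight μ p) ω i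

noncomputable def twoPoint (q x y : ℝ) : Measure ℝ :=
  ENNReal.ofReal (1 - q) • Measure.dirac x + ENNReal.ofReal q • Measure.dirac y

section PairStep

variable {μ : ℝ} {p : ℝ × ℝ}

theorem meanWeight_mem_Icc (h₁ : p.1 ≤ μ) (h₂ : μ ≤ p.2) : meanWeight μ p ∈ Icc (0 : ℝ) 1 := by
  rcases (h₁.trans h₂).eq_or_lt with heq | hlt
  · simp [meanWeight, heq]
  · exact ⟨div_nonneg (by linarith) (by linarith), div_le_one_of_le₀ (by linarith) (by linarith)⟩

theorem abs_sum_range_pairStep_sub_le (h₁ : p.1 ≤ μ) (h₂ : μ ≤ p.2) (ω : ℝ) (n : ℕ) :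
    |∑ i ∈ Finset.range n, pairStep μ p ω i - n * μ| ≤ p.2 - p.1 := by
  rcases (h₁.trans h₂).eq_or_lt with heq | hlt
  · have hμ : p.1 = μ := le_antisymm h₁ (heq ▸ h₂)
    simp [pairStep, ← heq, hμ]
  · have hsum : ∑ i ∈ Finset.range n, pairStep μ p ω i - n * μ
        = (p.2 - p.1) * (∑ i ∈ Finset.range n, rotationStep (meanWeight μ p) ω i
          - n * meanWeight μ p) := by
      simp only [pairStep, Finset.sum_add_distrib, ← Finset.mul_sum, Finset.sum_const,
        Finset.card_range, nsmul_eq_mul, meanWeight]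
      field_simp
      ring
    rw [hsum, abs_mul, abs_of_pos (sub_pos.2 hlt)]
    exact mul_le_of_le_one_right (sub_pos.2 hlt).le (abs_sum_range_rotationStep_sub_lt _ _ _).le

theorem map_pairStep (h₁ : p.1 ≤ μ) (h₂ : μ ≤ p.2) (i : ℕ) :
    (volume.restrict (Ioc (0 : ℝ) 1)).map (fun ω => pairStep μ p ω i)
      = twoPoint (meanWeight μ p) p.1 p.2 := by
  classical
  set q := meanWeight μ p
  have hq := meanWeight_mem_Icc h₁ h₂
  set S := (fun ω => i * q + ω) ⁻¹' jumpSet q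
  have hSm : MeasurableSet S := measurableSet_jumpSet q |>.preimage (by fun_prop)
  have hstep : (fun ω => pairStep μ p ω i) = fun ω => if ω ∈ S then p.2 else p.1 := by
    ext ω
    rw [pairStep, rotationStep_eq_indicator hq]
    by_cases hω : ω ∈ S
    · rw [if_pos hω, indicator_of_mem (show (i : ℝ) * q + ω ∈ jumpSet q from hω)]; simp
    · rw [if_neg hω, indicator_of_notMem (show (i : ℝ) * q + ω ∉ jumpSet q from hω)]; simp
  have hS : volume.restrict (Ioc (0 : ℝ) 1) S = ENNReal.ofReal q := by
    rw [Measure.restrict_apply hSm, volume_preimage_add_jumpSet hq]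
  have hSc : volume.restrict (Ioc (0 : ℝ) 1) Sᶜ = ENNReal.ofReal (1 - q) := by
    rw [prob_compl_eq_one_sub hSm, hS, ← ENNReal.ofReal_one, ENNReal.ofReal_sub _ hq.1]
  rw [hstep, map_ite_mem _ hSm, hS, hSc, twoPoint]

end PairStep

noncomputable def upperDeviation (ν : Measure ℝ) (μ : ℝ) : ENNReal :=
  ∫⁻ x, ENNReal.ofReal (x - μ) ∂ν

noncomputable def pairDensity (ν : Measure ℝ) (μ : ℝ) (p : ℝ × ℝ) : ENNReal :=
  ENNReal.ofReal (p.2 - p.1) / upperDeviation ν μ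

noncomputable def pairMixing (ν : Measure ℝ) (μ : ℝ) : Measure (ℝ × ℝ) :=
  ν {μ} • Measure.dirac (μ, μ)
    + ((ν.restrict (Iio μ)).prod (ν.restrict (Ioi μ))).withDensity (pairDensity ν μ)

section Mixture

variable (ν : Measure ℝ) (μ : ℝ)

theorem support_ofReal_sub_const : Function.support (fun x => ENNReal.ofReal (x - μ)) = Ioi μ := by
  ext x; simp

theorem support_ofReal_const_sub : Function.support (fun x => ENNReal.ofReal (μ - x)) = Iio μ := by
  ext x; simp

theorem restrict_Iio_add_dirac_add_restrict_Ioi :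
    ν.restrict (Iio μ) + ν {μ} • Measure.dirac μ + ν.restrict (Ioi μ) = ν := by
  rw [← Measure.restrict_singleton, ← Measure.restrict_union (by simp) (measurableSet_singleton μ),
    ← Measure.restrict_union (by simp) measurableSet_Ioi, Iio_union_right, Iic_union_Ioi,
    Measure.restrict_univ]

theorem ae_pairMixing {s : Set ℝ} (hs : ∀ᵐ x ∂ν, x ∈ s) :
    ∀ᵐ p ∂pairMixing ν μ, p = (μ, μ) ∨ p ∈ (s ∩ Iio μ) ×ˢ (s ∩ Ioi μ) := by
  rw [pairMixing, ae_add_measure_iff]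
  refine ⟨Measure.ae_smul_measure ?_ _, (withDensity_absolutelyContinuous _ _).ae_le ?_⟩
  · rw [ae_dirac_eq]; exact Filter.eventually_pure.2 (Or.inl rfl)
  · have h₁ : ∀ᵐ x ∂ν.restrict (Iio μ), x ∈ s ∩ Iio μ :=
      (ae_restrict_of_ae hs).and (ae_restrict_mem measurableSet_Iio)
    have h₂ : ∀ᵐ x ∂ν.restrict (Ioi μ), x ∈ s ∩ Ioi μ :=
      (ae_restrict_of_ae hs).and (ae_restrict_mem measurableSet_Ioi)
    filter_upwards [Measure.quasiMeasurePreserving_fst.ae h₁,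
      Measure.quasiMeasurePreserving_snd.ae h₂] with p hp₁ hp₂
    exact Or.inr ⟨hp₁, hp₂⟩

theorem ofReal_sub_mul_twoPoint {x y : ℝ} (hx : x < μ) (hy : μ < y) {B : Set ℝ}
    (hB : MeasurableSet B) :
    ENNReal.ofReal (y - x) * twoPoint (meanWeight μ (x, y)) x y B
      = B.indicator 1 x * ENNReal.ofReal (y - μ) + ENNReal.ofReal (μ - x) * B.indicator 1 y := by
  have hyx : 0 < y - x := by linarith
  have h₁ : (y - x) * (1 - meanWeight μ (x, y)) = y - μ := by
    simp only [meanWeight]; field_simp; ring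
  have h₂ : (y - x) * meanWeight μ (x, y) = μ - x := by
    simp only [meanWeight]; field_simp
  simp only [twoPoint, Measure.add_apply, Measure.smul_apply, Measure.dirac_apply' _ hB,
    smul_eq_mul, mul_add, ← mul_assoc, ← ENNReal.ofReal_mul hyx.le, h₁, h₂]
  ring

variable [SFinite ν] (hbal : ∫⁻ x, ENNReal.ofReal (μ - x) ∂ν = upperDeviation ν μ)
  (hfin : upperDeviation ν μ ≠ ⊤)
include hbal hfin

theorem lintegral_pairDensity_mul_twoPoint {B : Set ℝ} (hB : MeasurableSet B) :
    ∫⁻ p, pairDensity ν μ p * twoPoint (meanWeight μ p) p.1 p.2 B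
        ∂(ν.restrict (Iio μ)).prod (ν.restrict (Ioi μ))
      = ν.restrict (Iio μ) B + ν.restrict (Ioi μ) B := by
  set M := upperDeviation ν μ
  have hupper : ∫⁻ y, ENNReal.ofReal (y - μ) ∂ν.restrict (Ioi μ) = M :=
    setLIntegral_eq_of_support_subset (support_ofReal_sub_const μ).subset
  have hlower : ∫⁻ x, ENNReal.ofReal (μ - x) ∂ν.restrict (Iio μ) = M :=
    (setLIntegral_eq_of_support_subset (support_ofReal_const_sub μ).subset).trans hbal
  have hae : ∀ᵐ p ∂(ν.restrict (Iio μ)).prod (ν.restrict (Ioi μ)), p.1 < μ ∧ μ < p.2 :=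
    (Measure.quasiMeasurePreserving_fst.ae (ae_restrict_mem measurableSet_Iio)).and
      (Measure.quasiMeasurePreserving_snd.ae (ae_restrict_mem measurableSet_Ioi))
  calc _ = ∫⁻ p, M⁻¹ * (B.indicator 1 p.1 * ENNReal.ofReal (p.2 - μ)
        + ENNReal.ofReal (μ - p.1) * B.indicator 1 p.2)
        ∂(ν.restrict (Iio μ)).prod (ν.restrict (Ioi μ)) := by
        refine lintegral_congr_ae (hae.mono fun p hp => ?_)
        dsimp only [pairDensity]
        rw [div_eq_mul_inv, mul_comm _ M⁻¹, mul_assoc,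
          ofReal_sub_mul_twoPoint μ hp.1 hp.2 hB]
    _ = M⁻¹ * (ν.restrict (Iio μ) B * M + M * ν.restrict (Ioi μ) B) := by
        rw [lintegral_const_mul _ (by fun_prop), lintegral_add_left (by fun_prop),
          lintegral_prod_mul (f := B.indicator 1) (g := fun y => ENNReal.ofReal (y - μ))
            (by fun_prop) (by fun_prop),
          lintegral_prod_mul (f := fun x => ENNReal.ofReal (μ - x)) (g := B.indicator 1)
            (by fun_prop) (by fun_prop),
          lintegral_indicator_one hB, lintegral_indicator_one hB, hupper, hlower]
    _ = ν.restrict (Iio μ) B + ν.restrict (Ioi μ) B := by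
        rcases eq_or_ne M 0 with hM | hM
        · have hIio : ν (Iio μ) = 0 := support_ofReal_const_sub μ ▸
            (Measure.measure_support_eq_zero_iff ν).2
              ((lintegral_eq_zero_iff (by fun_prop)).1 (hbal.trans hM))
          have hIoi : ν (Ioi μ) = 0 := support_ofReal_sub_const μ ▸
            (Measure.measure_support_eq_zero_iff ν).2 ((lintegral_eq_zero_iff (by fun_prop)).1 hM)
          simp [Measure.restrict_apply hB, measure_mono_null inter_subset_right hIio,
            measure_mono_null inter_subset_right hIoi]
        · rw [mul_comm M, ← add_mul, mul_comm, mul_assoc, ENNReal.mul_inv_cancel hM hfin, mul_one]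

theorem lintegral_twoPoint_pairMixing {B : Set ℝ} (hB : MeasurableSet B) :
    ∫⁻ p, twoPoint (meanWeight μ p) p.1 p.2 B ∂pairMixing ν μ = ν B := by
  have hmeas : Measurable fun p : ℝ × ℝ => twoPoint (meanWeight μ p) p.1 p.2 B := by
    simp only [twoPoint, meanWeight, Measure.add_apply, Measure.smul_apply,
      Measure.dirac_apply' _ hB, smul_eq_mul]
    fun_prop (disch := exact hB)
  have hatom : twoPoint (meanWeight μ (μ, μ)) μ μ = Measure.dirac μ := by
    simp [twoPoint, meanWeight]
  rw [pairMixing, lintegral_add_measure, lintegral_smul_measure, lintegral_dirac, hatom,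
    lintegral_withDensity_eq_lintegral_mul _ (by unfold pairDensity; fun_prop) hmeas]
  conv_rhs => rw [← restrict_Iio_add_dirac_add_restrict_Ioi ν μ]
  rw [Pi.mul_def]
  simp only [Measure.add_apply, Measure.smul_apply,
    lintegral_pairDensity_mul_twoPoint ν μ hbal hfin hB]
  ring

end Mixture

section Coupling

variable {ν : Measure ℝ} {μ : ℝ}

theorem upperDeviation_ne_top [IsFiniteMeasure ν] (hint : Integrable (fun x => x) ν) :
    upperDeviation ν μ ≠ ⊤ :=
  (hint.sub (integrable_const μ)).lintegral_lt_top.ne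

theorem lintegral_ofReal_sub_eq_upperDeviation [IsProbabilityMeasure ν]
    (hint : Integrable (fun x => x) ν) (hμ : μ = ∫ x, x ∂ν) :
    ∫⁻ x, ENNReal.ofReal (μ - x) ∂ν = upperDeviation ν μ := by
  have hcentered : Integrable (fun x => x - μ) ν := hint.sub (integrable_const μ)
  have hzero : ∫ x, (x - μ) ∂ν = 0 := by
    rw [integral_sub hint (integrable_const μ), ← hμ]; simp
  have hneg : ∫⁻ x, ENNReal.ofReal (-(x - μ)) ∂ν ≠ ⊤ := hcentered.neg.lintegral_lt_top.ne
  rw [integral_eq_lintegral_pos_part_sub_lintegral_neg_part hcentered, sub_eq_zero,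
    ENNReal.toReal_eq_toReal_iff' hcentered.lintegral_lt_top.ne hneg] at hzero
  simpa only [neg_sub, upperDeviation] using hzero.symm

theorem measurable_pairStep (i : ℕ) :
    Measurable fun z : (ℝ × ℝ) × ℝ => pairStep μ z.1 z.2 i := by
  unfold pairStep rotationStep meanWeight
  fun_prop

theorem map_pairStep_prod [SFinite ν]
    (hbal : ∫⁻ x, ENNReal.ofReal (μ - x) ∂ν = upperDeviation ν μ)
    (hfin : upperDeviation ν μ ≠ ⊤) (i : ℕ) :
    ((pairMixing ν μ).prod (volume.restrict (Ioc (0 : ℝ) 1))).map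
      (fun z => pairStep μ z.1 z.2 i) = ν := by
  ext B hB
  rw [Measure.map_apply (measurable_pairStep i) hB, Measure.prod_apply (measurable_pairStep i hB),
    ← lintegral_twoPoint_pairMixing ν μ hbal hfin hB]
  refine lintegral_congr_ae ?_
  filter_upwards [ae_pairMixing ν μ (s := univ) (ae_of_all _ fun _ => trivial)] with p hp
  have hp' : p.1 ≤ μ ∧ μ ≤ p.2 := by
    rcases hp with rfl | ⟨⟨-, hx⟩, -, hy⟩
    · exact ⟨le_rfl, le_rfl⟩
    · exact ⟨hx.le, hy.le⟩
  rw [← map_pairStep hp'.1 hp'.2 i, Measure.map_apply (f := fun ω => pairStep μ p ω i)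
    ((measurable_pairStep i).comp measurable_prodMk_left) hB]
  rfl

end Coupling

/-- **Corollary 2.1 (a).** If the support of `F` is contained in `[a,b]`, `a < b`, and `F`
has mean `μ`, then there exist random variables `X₁, X₂, …` each distributed as `F` such
that for every `n`, `|S_n − nμ| ≤ b − a` almost surely. -/
theorem bounded_support_sum_control
    (ν : Measure ℝ) [IsProbabilityMeasure ν] (a b μ : ℝ) (hab : a < b)
    (hsupp : ν (Icc a b)ᶜ = 0) (hμ : μ = ∫ x, x ∂ν) :
    ∃ (Ω : Type) (mΩ : MeasurableSpace Ω) (P : Measure Ω) (X : ℕ → Ω → ℝ),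
      IsProbabilityMeasure P ∧
      (∀ i, Measure.map (X i) P = ν) ∧
      ∀ n : ℕ, ∀ᵐ ω ∂P, |(∑ i ∈ Finset.range n, X i ω) - (n : ℝ) * μ| ≤ b - a := by
  have hae : ∀ᵐ x ∂ν, x ∈ Icc a b :=
    (measure_eq_zero_iff_ae_notMem.1 hsupp).mono fun _ h => not_not.1 h
  have hint : Integrable (fun x => x) ν := Integrable.of_bound (by fun_prop) (max |a| |b|)
    (hae.mono fun x hx => abs_le_max_abs_abs hx.1 hx.2)
  have hlaw := map_pairStep_prod (lintegral_ofReal_sub_eq_upperDeviation hint hμ)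
    (upperDeviation_ne_top hint)
  refine ⟨_, _, (pairMixing ν μ).prod (volume.restrict (Ioc (0 : ℝ) 1)),
    fun i z => pairStep μ z.1 z.2 i, ?_, hlaw, fun n => ?_⟩
  · constructor
    simpa [Measure.map_apply (measurable_pairStep 0) .univ] using congrArg (· univ) (hlaw 0)
  · filter_upwards [Measure.quasiMeasurePreserving_fst.ae (ae_pairMixing ν μ hae)] with z hz
    obtain ⟨h₁, h₂, hwidth⟩ : z.1.1 ≤ μ ∧ μ ≤ z.1.2 ∧ z.1.2 - z.1.1 ≤ b - a := by
      rcases hz with h | ⟨⟨⟨ha, -⟩, hx⟩, ⟨-, hb⟩, hy⟩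
      · simp [h, hab.le]
      · exact ⟨hx.le, hy.le, by linarith⟩
    exact (abs_sum_range_pairStep_sub_le h₁ h₂ z.2 n).trans hwidth
end

section
/- Let F be a cumulative distribution function on ℝ with finite mean μ whose residual distribution F̃ has finite second moment, and let X_i, i ∈ ℕ, with X_i ∼ F and Z ∼ F̃ be such that Var(S_n) ≤ E[Z²]/4 for all n (as provided by the construction). If in addition Var(X₁) = E[Z²]/4, then the sequence (X_i)_{i∈ℕ} is strongly extremely negatively dependent (SEND): it is END, sup_{n∈ℕ} Var(S_n) is finite, and sup_{n∈ℕ} Var(S_n) ≤ sup_{n∈ℕ} Var(Y₁ + ⋯ + Y_n) for every sequence (Y_i)_{i∈ℕ} of random variables with common distribution F. -/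
open MeasureTheory ProbabilityTheory Set Filter Topology Asymptotics

lemma aemeasurable_of_map_eq {Ω : Type*} [MeasurableSpace Ω] {P : Measure Ω}
    {f : Ω → ℝ} {ν : Measure ℝ} [IsProbabilityMeasure ν]
    (h : Measure.map f P = ν) : AEMeasurable f P := by
  by_contra hf
  rw [Measure.map_of_not_aemeasurable hf] at h
  exact (IsProbabilityMeasure.ne_zero ν) h.symm

lemma evariance_map_eq {Ω : Type*} [MeasurableSpace Ω] {P : Measure Ω}
    {f : Ω → ℝ} (hf : AEMeasurable f P) :
    evariance f P = evariance id (Measure.map f P) := by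
  have hint : (Measure.map f P)[id] = P[f] := by
    rw [integral_map hf aestronglyMeasurable_id]; rfl
  rw [evariance, evariance, hint,
    lintegral_map' (by fun_prop) hf]; rfl

/-- **Proposition 2.2 (c).** Let `F` have finite mean `μ` and residual distribution `F̃`
with finite second moment, and let `X_i ∼ F`, `Z ∼ F̃` be as provided by the
construction (so `|S_n − nμ| ≤ Z` a.s. and `Var(S_n) ≤ E[Z²]/4` for all `n`). If
`Var(X₁) = E[Z²]/4`, then the sequence `(X_i)` is strongly extremely negatively
dependent (SEND): it is END, the variances `Var(S_n)` are uniformly bounded, and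
`sup_n Var(S_n) ≤ sup_n Var(Y₁ + ⋯ + Y_n)` for every sequence `(Y_i)` with common
distribution `F`. -/
theorem SEND_of_variance_attained
    (ν : Measure ℝ) [IsProbabilityMeasure ν] (μ : ℝ)
    (hint : Integrable id ν) (hμ : μ = ∫ x, x ∂ν)
    (hres : Integrable (fun x : ℝ => x ^ 2) (residualDist ν μ))
    {Ω : Type*} [MeasurableSpace Ω] (P : Measure Ω) [IsProbabilityMeasure P]
    (X : ℕ → Ω → ℝ) (Z : Ω → ℝ)
    (hX : ∀ i, Measure.map (X i) P = ν)
    (hZ : Measure.map Z P = residualDist ν μ)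
    (hdom : ∀ n : ℕ, ∀ᵐ ω ∂P, |(∑ i ∈ Finset.range n, X i ω) - (n : ℝ) * μ| ≤ Z ω)
    (hvar : ∀ n : ℕ,
      variance (fun ω => ∑ i ∈ Finset.range n, X i ω) P ≤ (∫ ω, (Z ω) ^ 2 ∂P) / 4)
    (heq : variance (X 0) P = (∫ ω, (Z ω) ^ 2 ∂P) / 4) :
    (∀ k : ℕ → ℝ, Tendsto k atTop atTop →
      ∀ᵐ ω ∂P,
        Tendsto (fun n : ℕ => ((∑ i ∈ Finset.range n, X i ω) - (n : ℝ) * μ) / k n)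
          atTop (nhds 0)) ∧
    (∃ C : ℝ, ∀ n : ℕ,
      variance (fun ω => ∑ i ∈ Finset.range n, X i ω) P ≤ C) ∧
    (∀ (Ω' : Type) (mΩ' : MeasurableSpace Ω') (P' : Measure Ω') (Y : ℕ → Ω' → ℝ),
      IsProbabilityMeasure P' → (∀ i, Measure.map (Y i) P' = ν) →
      ∀ C : ℝ,
        (∀ n : ℕ, variance (fun ω => ∑ i ∈ Finset.range n, Y i ω) P' ≤ C) →
        ∀ n : ℕ, variance (fun ω => ∑ i ∈ Finset.range n, X i ω) P ≤ C) := by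
  refine ⟨?_, ⟨(∫ ω, (Z ω) ^ 2 ∂P) / 4, hvar⟩, ?_⟩
  · intro k hk
    filter_upwards [ae_all_iff.2 hdom] with ω hω
    have hk0 : Tendsto (fun n : ℕ => Z ω / k n) atTop (nhds 0) :=
      Tendsto.div_atTop tendsto_const_nhds hk
    apply squeeze_zero_norm' _ hk0
    filter_upwards [hk.eventually_ge_atTop 1] with n hn
    have hkpos : 0 < k n := lt_of_lt_of_le zero_lt_one hn
    rw [Real.norm_eq_abs, abs_div, abs_of_pos hkpos]
    gcongr
    exact hω n
  · intro Ω' mΩ' P' Y hP' hY C hC n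
    haveI := hP'
    have hXm : AEMeasurable (X 0) P := aemeasurable_of_map_eq (hX 0)
    have hYm : AEMeasurable (Y 0) P' := aemeasurable_of_map_eq (hY 0)
    have h1 : variance (X 0) P = variance (Y 0) P' := by
      show (evariance (X 0) P).toReal = (evariance (Y 0) P').toReal
      rw [evariance_map_eq hXm, evariance_map_eq hYm, hX 0, hY 0]
    have h2 := hC 1
    simp only [Finset.sum_range_one] at h2
    calc variance (fun ω => ∑ i ∈ Finset.range n, X i ω) P
        ≤ (∫ ω, (Z ω) ^ 2 ∂P) / 4 := hvar n
      _ = variance (X 0) P := heq.symm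
      _ = variance (Y 0) P' := h1
      _ ≤ C := h2
end

section
/- Let F be a cumulative distribution function on ℝ with mean μ whose support is contained in [a,b], a < b, a,b ∈ ℝ. Then max over S ∈ 𝔖_n of P(|S − E[S]| ≤ b − a) equals 1; that is, there exists S ∈ 𝔖_n with |S − nμ| ≤ b − a almost surely. -/
open MeasureTheory ProbabilityTheory Set Filter Topology

/-!
Let `Q` be the quantile function of `ν`, a monotone map `(0, 1] → [a, b]` pushing the uniform law
forward to `ν`. On the circle `ℝ/ℤ` with its uniform law put `Xᵢ(x) = Q(x + i/n)`; rotations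
preserve the uniform law, so each `Xᵢ ∼ ν`. For every `x` the points `x + i/n` are, up to order,
`s + k/n` (`k < n`) with `s ∈ (0, 1/n]`, so by monotonicity the sum lies between `∑ₖ Q(k/n)` and
`∑ₖ Q((k+1)/n)`, a window of width `Q 1 - Q 0 ≤ b - a` by telescoping. The mean `nμ` of the sum
lies in the same window, hence `|∑ᵢ Xᵢ - nμ| ≤ b - a` everywhere.
-/

namespace ProbabilityTheory

/-- The generalised inverse `t ↦ inf {x ≥ a | t ≤ cdf ν x}` of `cdf ν`; the cutoff `a` and the cap
`min t 1` make it monotone and `[a, b]`-valued on all of `ℝ` when `ν` is carried by `[a, b]`. -/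
noncomputable def quantileFrom (ν : Measure ℝ) (a t : ℝ) : ℝ :=
  sInf {x | min t 1 ≤ cdf ν x ∧ a ≤ x}

variable {ν : Measure ℝ} [IsProbabilityMeasure ν] {a b : ℝ}

lemma cdf_eq_zero_of_lt (hsupp : ν (Icc a b)ᶜ = 0) {x : ℝ} (hx : x < a) : cdf ν x = 0 := by
  rw [cdf_eq_real, measureReal_def,
    measure_mono_null (fun y hy hy' => by linarith [hy'.1, mem_Iic.1 hy]) hsupp, ENNReal.toReal_zero]

lemma cdf_eq_one_of_le (hsupp : ν (Icc a b)ᶜ = 0) {x : ℝ} (hx : b ≤ x) : cdf ν x = 1 := by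
  have h : ν (Iic x) = 1 := (prob_compl_eq_zero_iff measurableSet_Iic).1 <|
    measure_mono_null (compl_subset_compl.2 (Icc_subset_Iic_self.trans (Iic_subset_Iic.2 hx))) hsupp
  rw [cdf_eq_real, measureReal_def, h, ENNReal.toReal_one]

lemma right_mem_quantileFrom_set (hab : a ≤ b) (hsupp : ν (Icc a b)ᶜ = 0) (t : ℝ) :
    b ∈ {x | min t 1 ≤ cdf ν x ∧ a ≤ x} :=
  ⟨by rw [cdf_eq_one_of_le hsupp le_rfl]; exact min_le_right _ _, hab⟩

lemma quantileFrom_mem_Icc (hab : a ≤ b) (hsupp : ν (Icc a b)ᶜ = 0) (t : ℝ) :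
    quantileFrom ν a t ∈ Icc a b :=
  ⟨le_csInf ⟨b, right_mem_quantileFrom_set hab hsupp t⟩ fun _ hx => hx.2,
    csInf_le ⟨a, fun _ hx => hx.2⟩ (right_mem_quantileFrom_set hab hsupp t)⟩

lemma monotone_quantileFrom (hab : a ≤ b) (hsupp : ν (Icc a b)ᶜ = 0) :
    Monotone (quantileFrom ν a) := fun _ t hst =>
  csInf_le_csInf ⟨a, fun _ hx => hx.2⟩ ⟨b, right_mem_quantileFrom_set hab hsupp t⟩
    fun _ hx => ⟨(min_le_min_right 1 hst).trans hx.1, hx.2⟩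

lemma quantileFrom_le_iff (hab : a ≤ b) (hsupp : ν (Icc a b)ᶜ = 0) {u : ℝ} (hu : u ∈ Ioc 0 1)
    (x : ℝ) : quantileFrom ν a u ≤ x ↔ u ≤ cdf ν x := by
  have hne := right_mem_quantileFrom_set hab hsupp u
  rw [quantileFrom, min_eq_left hu.2] at *
  constructor
  · intro h
    have hcont : Tendsto (cdf ν) (𝓝[>] x) (𝓝 (cdf ν x)) :=
      ((cdf ν).right_continuous x).tendsto.mono_left (nhdsWithin_mono x Ioi_subset_Ici_self)
    refine ge_of_tendsto hcont (eventually_nhdsWithin_of_forall fun y hy => ?_)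
    obtain ⟨z, hz, hzy⟩ := exists_lt_of_csInf_lt ⟨b, hne⟩ (h.trans_lt hy)
    exact hz.1.trans (monotone_cdf ν hzy.le)
  · intro h
    refine csInf_le ⟨a, fun _ hx => hx.2⟩ ⟨h, le_of_not_gt fun hx => ?_⟩
    rw [cdf_eq_zero_of_lt hsupp hx] at h
    exact hu.1.not_ge h

lemma map_quantileFrom (hab : a ≤ b) (hsupp : ν (Icc a b)ᶜ = 0) :
    (volume.restrict (Ioc (0 : ℝ) 1)).map (quantileFrom ν a) = ν := by
  have hQ := (monotone_quantileFrom hab hsupp).measurable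
  refine Measure.ext_of_Iic _ _ fun x => ?_
  have hpre : quantileFrom ν a ⁻¹' Iic x ∩ Ioc 0 1 = Ioc 0 (cdf ν x) := by
    ext u
    simp only [mem_inter_iff, mem_preimage, mem_Iic, mem_Ioc]
    constructor
    · rintro ⟨hux, hu⟩
      exact ⟨hu.1, (quantileFrom_le_iff hab hsupp hu x).1 hux⟩
    · rintro ⟨hu0, hux⟩
      have hu : u ∈ Ioc (0 : ℝ) 1 := ⟨hu0, hux.trans (cdf_le_one ν x)⟩
      exact ⟨(quantileFrom_le_iff hab hsupp hu x).2 hux, hu⟩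
  rw [Measure.map_apply hQ measurableSet_Iic, Measure.restrict_apply (hQ measurableSet_Iic), hpre,
    Real.volume_Ioc, sub_zero, ofReal_cdf]

end ProbabilityTheory

namespace AddCircle

variable {T : ℝ} [Fact (0 < T)]

lemma measurePreserving_liftIoc_id (t : ℝ) :
    MeasurePreserving (liftIoc T t id) volume (volume.restrict (Ioc t (t + T))) :=
  (measurePreserving_subtype_coe measurableSet_Ioc).comp (measurePreserving_equivIoc T)

lemma measurable_liftIoc {β : Type*} [MeasurableSpace β] (t : ℝ) {f : ℝ → β} (hf : Measurable f) :
    Measurable (liftIoc T t f) :=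
  hf.comp (measurePreserving_liftIoc_id t).measurable

lemma map_liftIoc_add {β : Type*} [MeasurableSpace β] (t : ℝ) {f : ℝ → β} (hf : Measurable f)
    (c : AddCircle T) :
    (volume : Measure (AddCircle T)).map (fun x => liftIoc T t f (x + c)) =
      (volume.restrict (Ioc t (t + T))).map f := by
  have h := (measurePreserving_liftIoc_id t).comp (measurePreserving_add_right volume c)
  rw [← h.map_eq, Measure.map_map hf h.measurable]
  rfl

end AddCircle

instance : IsProbabilityMeasure (volume : Measure UnitAddCircle) := ⟨by simp⟩

lemma Function.Periodic.sum_range_int_add {M : Type*} [AddCommMonoid M] {g : ℤ → M} {n : ℕ}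
    (hg : Function.Periodic g n) (d : ℤ) :
    ∑ i ∈ Finset.range n, g (d + i) = ∑ i ∈ Finset.range n, g i := by
  have step (d : ℤ) : ∑ i ∈ Finset.range n, g (d + 1 + i) = ∑ i ∈ Finset.range n, g (d + i) := by
    cases n with
    | zero => simp
    | succ m =>
      have hwrap : g (d + 1 + m) = g (d + 0) := by
        rw [add_zero, ← hg d]; push_cast; ring_nf
      rw [Finset.sum_range_succ, Finset.sum_range_succ' (fun i : ℕ => g (d + i)), hwrap]
      congr 1
      exact Finset.sum_congr rfl fun i _ => by push_cast; ring_nf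
  induction d using Int.induction_on with
  | zero => simp
  | succ k ih => rw [step, ih]
  | pred k ih => rw [← step, sub_add_cancel, ih]

section

open AddCircle

lemma exists_sum_liftIoc_add_div_eq {β : Type*} [AddCommMonoid β] (f : ℝ → β) {n : ℕ} (hn : 0 < n)
    (x : UnitAddCircle) :
    ∃ s ∈ Ioc (0 : ℝ) (1 / (n : ℝ)), ∑ i : Fin n, liftIoc 1 0 f (x + ↑((i : ℕ) / n : ℝ)) =
      ∑ k ∈ Finset.range n, f (s + k / n) := by
  obtain ⟨u, rfl⟩ := QuotientAddGroup.mk_surjective x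
  have hn' : (0 : ℝ) < n := Nat.cast_pos.2 hn
  have hp : (0 : ℝ) < 1 / n := by positivity
  set s := toIocMod hp 0 u
  have hs : s ∈ Ioc 0 (1 / (n : ℝ)) := by simpa only [zero_add] using toIocMod_mem_Ioc hp 0 u
  let g : ℤ → β := fun k => liftIoc 1 0 f (↑u + ↑((k : ℝ) / n))
  have hg : Function.Periodic g n := fun k => by
    simp only [g, Int.cast_add, Int.cast_natCast, add_div, div_self hn'.ne', coe_add, coe_period,
      add_zero]
  refine ⟨s, hs, ?_⟩
  calc ∑ i : Fin n, liftIoc 1 0 f (↑u + ↑((i : ℕ) / n : ℝ))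
      = ∑ k ∈ Finset.range n, g k := by
        rw [Fin.sum_univ_eq_sum_range (fun k => liftIoc 1 0 f (↑u + ↑((k : ℝ) / n)))]
        simp only [g, Int.cast_natCast]
    -- shifting the index by `-toIocDiv` moves the base point from `u` down to `s ∈ (0, 1/n]`
    _ = ∑ k ∈ Finset.range n, g (-toIocDiv hp 0 u + k) := (hg.sum_range_int_add _).symm
    _ = ∑ k ∈ Finset.range n, f (s + k / n) := Finset.sum_congr rfl fun k hk => by
        have hk : (k : ℝ) + 1 ≤ n := by exact_mod_cast Finset.mem_range.1 hk
        have hmem : s + k / n ∈ Ioc (0 : ℝ) (0 + 1) := by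
          refine ⟨by have := hs.1; positivity, ?_⟩
          calc s + k / n ≤ 1 / n + k / n := by linarith [hs.2]
            _ = (k + 1) / n := by ring
            _ ≤ 0 + 1 := by rw [zero_add]; exact (div_le_one hn').2 hk
        rw [← liftIoc_coe_apply (f := f) hmem]
        simp only [g]
        congr 1
        rw [← coe_add]
        congr 1
        have hu := toIocMod_add_toIocDiv_zsmul hp 0 u
        rw [zsmul_eq_mul] at hu
        push_cast
        linear_combination -hu

lemma sum_liftIoc_add_div_mem_Icc {Q : ℝ → ℝ} (hQ : Monotone Q) {n : ℕ} (hn : 0 < n)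
    (x : UnitAddCircle) :
    ∑ i : Fin n, liftIoc 1 0 Q (x + ↑((i : ℕ) / n : ℝ)) ∈
      Icc (∑ k ∈ Finset.range n, Q (k / n)) (∑ k ∈ Finset.range n, Q ((k + 1 : ℕ) / n)) := by
  obtain ⟨s, hs, hsum⟩ := exists_sum_liftIoc_add_div_eq Q hn x
  rw [hsum]
  refine ⟨Finset.sum_le_sum fun k _ => hQ (by linarith [hs.1]),
    Finset.sum_le_sum fun k _ => hQ ?_⟩
  rw [Nat.cast_succ, add_div]
  linarith [hs.2]

lemma sum_liftIoc_add_div_sub_le {Q : ℝ → ℝ} (hQ : Monotone Q) {n : ℕ} (hn : 0 < n)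
    (x y : UnitAddCircle) :
    ∑ i : Fin n, liftIoc 1 0 Q (x + ↑((i : ℕ) / n : ℝ)) -
      ∑ i : Fin n, liftIoc 1 0 Q (y + ↑((i : ℕ) / n : ℝ)) ≤ Q 1 - Q 0 := by
  have htel : ∑ k ∈ Finset.range n, Q ((k + 1 : ℕ) / n) - ∑ k ∈ Finset.range n, Q (k / n) =
      Q 1 - Q 0 := by
    rw [← Finset.sum_sub_distrib, Finset.sum_range_sub (fun k : ℕ => Q (k / n)),
      div_self (Nat.cast_pos.2 hn).ne', Nat.cast_zero, zero_div]
  linarith [(sum_liftIoc_add_div_mem_Icc hQ hn x).2, (sum_liftIoc_add_div_mem_Icc hQ hn y).1]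

end

lemma abs_sub_integral_le_of_forall_sub_le {Ω : Type*} [MeasurableSpace Ω] {P : Measure Ω}
    [IsProbabilityMeasure P] {f : Ω → ℝ} (hf : Integrable f P) {c : ℝ}
    (hc : ∀ x y, f x - f y ≤ c) (x : Ω) : |f x - ∫ y, f y ∂P| ≤ c := by
  have upper : ∫ y, f y ∂P ≤ f x + c := by
    calc ∫ y, f y ∂P ≤ ∫ _, f x + c ∂P :=
          integral_mono hf (integrable_const _) fun y => by linarith [hc y x]
      _ = f x + c := by simp
  have lower : f x - c ≤ ∫ y, f y ∂P := by
    calc f x - c = ∫ _, f x - c ∂P := by simp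
      _ ≤ ∫ y, f y ∂P := integral_mono (integrable_const _) hf fun y => by linarith [hc x y]
  rw [abs_le]
  constructor <;> linarith

/-- **Corollary 3.1 (a).** If `F` has support contained in `[a,b]`, `a < b`, and mean
`μ`, then the maximum over `S` in the admissible risk class `𝔖_n` of
`P(|S − E[S]| ≤ b − a)` equals `1`: there exist `X₁, …, X_n` each distributed as `F`
with `|X₁ + ⋯ + X_n − nμ| ≤ b − a` almost surely. -/
theorem max_prob_concentration_eq_one
    (ν : Measure ℝ) [IsProbabilityMeasure ν] (a b μ : ℝ) (hab : a < b)
    (hsupp : ν (Icc a b)ᶜ = 0) (hμ : μ = ∫ x, x ∂ν) (n : ℕ) (hn : 0 < n) :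
    ∃ (Ω : Type) (mΩ : MeasurableSpace Ω) (P : Measure Ω) (X : Fin n → Ω → ℝ),
      IsProbabilityMeasure P ∧
      (∀ i, Measure.map (X i) P = ν) ∧
      P {ω | |(∑ i, X i ω) - (n : ℝ) * μ| ≤ b - a} = 1 := by
  set Q := quantileFrom ν a
  have hQ : Monotone Q := monotone_quantileFrom hab.le hsupp
  let X : Fin n → UnitAddCircle → ℝ := fun i x => AddCircle.liftIoc 1 0 Q (x + ↑((i : ℕ) / n : ℝ))
  have hXmeas (i : Fin n) : Measurable (X i) :=
    (AddCircle.measurable_liftIoc 0 hQ.measurable).comp (measurable_add_const _)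
  have hXlaw (i : Fin n) : volume.map (X i) = ν := by
    rw [AddCircle.map_liftIoc_add 0 hQ.measurable, zero_add]
    exact map_quantileFrom hab.le hsupp
  have hXint (i : Fin n) : Integrable (X i) := Integrable.of_mem_Icc a b (hXmeas i).aemeasurable
    (ae_of_all _ fun _ => quantileFrom_mem_Icc hab.le hsupp _)
  have hmean : ∫ x, ∑ i, X i x = n * μ := by
    have hXmean (i : Fin n) : ∫ x, X i x = μ := by
      rw [hμ, ← hXlaw i]
      exact (integral_map (hXmeas i).aemeasurable aestronglyMeasurable_id).symm
    simp [integral_finsetSum _ fun i _ => hXint i, hXmean]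
  refine ⟨UnitAddCircle, inferInstance, volume, X, inferInstance, hXlaw, ?_⟩
  suffices hall : ∀ x, |∑ i, X i x - n * μ| ≤ b - a by simp [hall]
  intro x
  rw [← hmean]
  refine abs_sub_integral_le_of_forall_sub_le (integrable_finsetSum _ fun i _ => hXint i)
    (fun x y => (sum_liftIoc_add_div_sub_le hQ hn x y).trans ?_) x
  linarith [(quantileFrom_mem_Icc hab.le hsupp 1).2, (quantileFrom_mem_Icc hab.le hsupp 0).1]
end
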